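/- Let N and H be complex Hilbert spaces and let U = [[D, C], [C*, A]] be a selfadjoint contraction on N ⊕ H, where D : N → N, C : H → N, A : H → H. Then for every x ∈ (−1, 1) the operator Θ(x) = D + x·C (I − xA)^{-1} C* is a selfadjoint contraction on N (in particular ‖Θ(x)‖ ≤ 1). -/

import Mathlib

open ContinuousLinearMap Complex Filter
open scoped InnerProductSpace Topology

set_option synthInstance.maxHeartbeats 1000000
set_option maxHeartbeats 1000000

noncomputable section

variable {E F : Type*} [NormedAddCommGroup E] [InnerProductSpace ℂ E]
  [NormedAddCommGroup F] [InnerProductSpace ℂ F]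

/-- The 2×2 block operator `[[A, B], [C, D]]` on the Hilbert space orthogonal direct sum
`E ⊕ F` (realized as `WithLp 2 (E × F)`), acting by `(e, f) ↦ (A e + B f, C e + D f)`. -/
def blk (A : E →L[ℂ] E) (B : F →L[ℂ] E) (C : E →L[ℂ] F) (D : F →L[ℂ] F) :
    WithLp 2 (E × F) →L[ℂ] WithLp 2 (E × F) :=
  ((WithLp.prodContinuousLinearEquiv 2 ℂ E F).symm : E × F →L[ℂ] WithLp 2 (E × F)) ∘L
    ((A.coprod B).prod (C.coprod D)) ∘L
    ((WithLp.prodContinuousLinearEquiv 2 ℂ E F) : WithLp 2 (E × F) →L[ℂ] E × F)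

/-- The isometric embedding of the first summand `E` into `E ⊕ F`. -/
def inl2 : E →L[ℂ] WithLp 2 (E × F) :=
  ((WithLp.prodContinuousLinearEquiv 2 ℂ E F).symm : E × F →L[ℂ] WithLp 2 (E × F)) ∘L
    .inl ℂ E F

/-- The isometric embedding of the second summand `F` into `E ⊕ F`. -/
def inr2 : F →L[ℂ] WithLp 2 (E × F) :=
  ((WithLp.prodContinuousLinearEquiv 2 ℂ E F).symm : E × F →L[ℂ] WithLp 2 (E × F)) ∘L
    .inr ℂ E F

/-- The orthogonal projection of `E ⊕ F` onto the first summand `E`. -/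
def fst2 : WithLp 2 (E × F) →L[ℂ] E :=
  .fst ℂ E F ∘L ((WithLp.prodContinuousLinearEquiv 2 ℂ E F) : WithLp 2 (E × F) →L[ℂ] E × F)

/-- The orthogonal projection of `E ⊕ F` onto the second summand `F`. -/
def snd2 : WithLp 2 (E × F) →L[ℂ] F :=
  .snd ℂ E F ∘L ((WithLp.prodContinuousLinearEquiv 2 ℂ E F) : WithLp 2 (E × F) →L[ℂ] E × F)

/-- The element `(e, f)` of the orthogonal direct sum `E ⊕ F`. -/
def mk2 (e : E) (f : F) : WithLp 2 (E × F) :=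
  (WithLp.prodContinuousLinearEquiv 2 ℂ E F).symm (e, f)

lemma blk_mk2 (A : E →L[ℂ] E) (B : F →L[ℂ] E) (C : E →L[ℂ] F) (D : F →L[ℂ] F) (e : E) (f : F) :
    blk A B C D (mk2 e f) = mk2 (A e + B f) (C e + D f) := rfl

lemma inner_mk2 (a c : E) (b d : F) :
    inner ℂ (mk2 a b) (mk2 c d) = inner ℂ a c + inner ℂ b d := rfl

lemma norm_mk2_sq (e : E) (f : F) : ‖mk2 e f‖ ^ 2 = ‖e‖ ^ 2 + ‖f‖ ^ 2 :=
  WithLp.prod_norm_sq_eq_of_L2 (mk2 e f)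

section blocks

variable {A : E →L[ℂ] E} {B : F →L[ℂ] E} {C : E →L[ℂ] F} {D : F →L[ℂ] F}

lemma norm_sq_blk_apply_le (hU : ‖blk A B C D‖ ≤ 1) (e : E) (f : F) :
    ‖A e + B f‖ ^ 2 + ‖C e + D f‖ ^ 2 ≤ ‖e‖ ^ 2 + ‖f‖ ^ 2 := by
  rw [← norm_mk2_sq, ← norm_mk2_sq, ← blk_mk2]
  gcongr
  exact (blk A B C D).le_of_opNorm_le hU _ |>.trans_eq (one_mul _)

lemma norm_le_one_of_norm_blk_le_one (hU : ‖blk A B C D‖ ≤ 1) : ‖D‖ ≤ 1 := by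
  refine opNorm_le_bound _ zero_le_one fun f => ?_
  have h := norm_sq_blk_apply_le hU 0 f
  simp only [map_zero, zero_add, norm_zero] at h
  rw [one_mul]
  nlinarith [norm_nonneg (D f), norm_nonneg f, norm_nonneg (B f)]

variable [CompleteSpace E] [CompleteSpace F]

lemma IsSelfAdjoint.blk_topLeft (hU : IsSelfAdjoint (blk A B C D)) : IsSelfAdjoint A := by
  rw [isSelfAdjoint_iff_isSymmetric]
  intro e₁ e₂
  have h := hU.isSymmetric (mk2 e₁ 0) (mk2 e₂ 0)
  rw [coe_coe, blk_mk2, blk_mk2, inner_mk2, inner_mk2] at h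
  simpa using h

lemma IsSelfAdjoint.blk_bottomRight (hU : IsSelfAdjoint (blk A B C D)) : IsSelfAdjoint D := by
  rw [isSelfAdjoint_iff_isSymmetric]
  intro f₁ f₂
  have h := hU.isSymmetric (mk2 0 f₁) (mk2 0 f₂)
  rw [coe_coe, blk_mk2, blk_mk2, inner_mk2, inner_mk2] at h
  simpa using h

end blocks

lemma isUnit_one_sub_smul {A : F →L[ℂ] F} [CompleteSpace F] (hA : ‖A‖ ≤ 1) {x : ℝ}
    (hx : |x| < 1) : IsUnit (1 - (x : ℂ) • A) := by
  refine (Units.oneSub _ ?_).isUnit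
  rw [norm_smul, Complex.norm_real, Real.norm_eq_abs]
  nlinarith [abs_nonneg x, norm_nonneg A]

/-- `Θ(x) = D + x C (I - x A)⁻¹ B`, the transfer function of the system with system operator
`[[D, C], [B, A]]`. -/
def transferFn (D : E →L[ℂ] E) (C : F →L[ℂ] E) (B : E →L[ℂ] F) (A : F →L[ℂ] F) (x : ℝ) :
    E →L[ℂ] E :=
  D + (x : ℂ) • (C ∘L Ring.inverse (1 - (x : ℂ) • A) ∘L B)

lemma isSelfAdjoint_transferFn [CompleteSpace E] [CompleteSpace F] {D : E →L[ℂ] E}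
    {A : F →L[ℂ] F} (hD : IsSelfAdjoint D) (hA : IsSelfAdjoint A) (C : F →L[ℂ] E) (x : ℝ) :
    IsSelfAdjoint (transferFn D C (adjoint C) A x) := by
  have hx : IsSelfAdjoint (x : ℂ) := Complex.conj_ofReal x
  have hres : IsSelfAdjoint (Ring.inverse (1 - (x : ℂ) • A)) :=
    ((IsSelfAdjoint.one _).sub (hx.smul hA)).ringInverse
  exact hD.add (hx.smul (hres.conj_adjoint C))

/-- The state `h = x (I - x A)⁻¹ B e` solves `h = x (B e + A h)`, so the system operator maps
`(e, h)` to `(Θ(x) e, B e + A h)`; hence `‖Θ(x) e‖² + ‖B e + A h‖² ≤ ‖e‖² + x² ‖B e + A h‖²`. -/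
lemma norm_transferFn_le [CompleteSpace F] {D : E →L[ℂ] E} {C : F →L[ℂ] E} {B : E →L[ℂ] F}
    {A : F →L[ℂ] F} (hU : ‖blk D C B A‖ ≤ 1) {x : ℝ} (hx : |x| ≤ 1)
    (hres : IsUnit (1 - (x : ℂ) • A)) : ‖transferFn D C B A x‖ ≤ 1 := by
  refine opNorm_le_bound _ zero_le_one fun e => ?_
  set h : F := (x : ℂ) • Ring.inverse (1 - (x : ℂ) • A) (B e)
  have hstate : h = (x : ℂ) • (B e + A h) := by
    have hinv : (1 - (x : ℂ) • A) (Ring.inverse (1 - (x : ℂ) • A) (B e)) = B e := by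
      rw [← mul_apply_eq_comp, Ring.mul_inverse_cancel _ hres, one_apply_eq_self]
    rw [sub_apply, one_apply_eq_self, smul_apply] at hinv
    simp only [h, map_smul]
    linear_combination (norm := module) (x : ℂ) • hinv
  have hΘ : transferFn D C B A x e = D e + C h := by
    simp [transferFn, h]
  have hbound := norm_sq_blk_apply_le hU e h
  rw [← hΘ] at hbound
  have hnorm_h : ‖h‖ = |x| * ‖B e + A h‖ := by
    conv_lhs => rw [hstate]
    rw [norm_smul, Complex.norm_real, Real.norm_eq_abs]
  rw [hnorm_h, mul_pow] at hbound
  have hx2 : |x| ^ 2 ≤ 1 := by nlinarith [abs_nonneg x]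
  rw [one_mul, ← pow_le_pow_iff_left₀ (norm_nonneg _) (norm_nonneg _) two_ne_zero]
  nlinarith [sq_nonneg ‖B e + A h‖]

/-- If `U = [[D, C], [C*, A]]` is a selfadjoint contraction on `N ⊕ H`, then for every
`x ∈ (−1, 1)` the value `Θ(x) = D + x·C (I − xA)⁻¹ C*` of the transfer function is a
selfadjoint contraction on `N`. -/
theorem stmt_18 {N H : Type*} [NormedAddCommGroup N] [InnerProductSpace ℂ N] [CompleteSpace N]
    [NormedAddCommGroup H] [InnerProductSpace ℂ H] [CompleteSpace H]
    (D : N →L[ℂ] N) (C : H →L[ℂ] N) (A : H →L[ℂ] H)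
    (hUsa : IsSelfAdjoint (blk D C (adjoint C) A))
    (hUc : ‖blk D C (adjoint C) A‖ ≤ 1)
    (x : ℝ) (hx : x ∈ Set.Ioo (-1 : ℝ) 1) :
    IsSelfAdjoint (D + (x : ℂ) • (C ∘L Ring.inverse (1 - (x : ℂ) • A) ∘L adjoint C)) ∧
      ‖D + (x : ℂ) • (C ∘L Ring.inverse (1 - (x : ℂ) • A) ∘L adjoint C)‖ ≤ 1 := by
  have hx' : |x| < 1 := abs_lt.2 hx
  have hres := isUnit_one_sub_smul (norm_le_one_of_norm_blk_le_one hUc) hx'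
  exact ⟨isSelfAdjoint_transferFn hUsa.blk_topLeft hUsa.blk_bottomRight C x,
    norm_transferFn_le hUc hx'.le hres⟩
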